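/- Every almost-Riordan array factors as a semidirect-type product: (d | g, f) = [d, tg] · (1 | 1, f), i.e., the product of the quasi-Riordan array [d, tg] with the almost-Riordan array (1 | 1, f) equals (d | g, f). -/

import Mathlib

open PowerSeries

/-- Column generating functions `(d, tg, tgf, tgf², …)` of the almost-Riordan
array `(d | g, f)`. -/
noncomputable def arCol {K : Type*} [Field K] (d g f : PowerSeries K) : ℕ → PowerSeries K
  | 0 => d
  | k + 1 => X * g * f ^ k

/-- Column generating functions `(d, tg, t·tg, t²·tg, …)` of the quasi-Riordan
array `[d, tg]`. -/
noncomputable def qtgCol {K : Type*} [Field K] (d g : PowerSeries K) : ℕ → PowerSeries K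
  | 0 => d
  | k + 1 => X ^ k * (X * g)

/-- Column generating functions `(1, t, tf, tf², …)` of the almost-Riordan
array `(1 | 1, f)`. -/
noncomputable def oneCol {K : Type*} [Field K] (f : PowerSeries K) : ℕ → PowerSeries K
  | 0 => 1
  | k + 1 => X * f ^ k

/-! Every column of `[d, tg]` after the first is `tʲ·g`, so as a matrix acting on columns
`[d, tg]` sends `b` to `g·b + b₀·(d - g)`. The columns of `(1 | 1, f)` are `1`, with `b₀ = 1`,
and `t·fᵏ`, with `b₀ = 0`; they are sent to `d` and `t·g·fᵏ`, the columns of `(d | g, f)`. -/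

theorem qtgCol_succ {K : Type*} [Field K] (d g : PowerSeries K) (j : ℕ) :
    qtgCol d g (j + 1) = X ^ (j + 1) * g := by
  rw [qtgCol, pow_succ, mul_assoc]

theorem sum_coeff_X_pow_mul_mul_coeff {R : Type*} [CommSemiring R] (g b : PowerSeries R) (n : ℕ) :
    ∑ j ∈ Finset.range (n + 1), coeff n (X ^ j * g) * coeff j b = coeff n (g * b) := by
  rw [mul_comm g, coeff_mul, Finset.Nat.sum_antidiagonal_eq_sum_range_succ_mk]
  refine Finset.sum_congr rfl fun j hj => ?_
  rw [coeff_X_pow_mul', if_pos (Nat.lt_succ_iff.mp (Finset.mem_range.mp hj)), mul_comm]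

theorem sum_coeff_qtgCol_mul_coeff {K : Type*} [Field K] (d g b : PowerSeries K) (n : ℕ) :
    ∑ j ∈ Finset.range (n + 1), coeff n (qtgCol d g j) * coeff j b =
      coeff n (g * b + C (constantCoeff b) * (d - g)) := by
  rw [map_add, ← sum_coeff_X_pow_mul_mul_coeff, Finset.sum_range_succ', Finset.sum_range_succ']
  simp only [qtgCol_succ]
  simp only [qtgCol, pow_zero, one_mul, coeff_C_mul, map_sub, coeff_zero_eq_constantCoeff]
  ring

theorem almost_riordan_factorization_general {K : Type*} [Field K]
    (d g f : PowerSeries K) :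
    ∀ n k : ℕ, coeff n (arCol d g f k) =
      ∑ j ∈ Finset.range (n + 1),
        coeff n (qtgCol d g j) * coeff j (oneCol f k) := by
  intro n k
  rw [sum_coeff_qtgCol_mul_coeff]
  cases k with
  | zero => simp [arCol, oneCol]
  | succ k =>
    simp only [arCol, oneCol, map_mul, constantCoeff_X, zero_mul, map_zero, add_zero]
    congr 1
    ring

/-- Every almost-Riordan array factors as `(d | g, f) = [d, tg]·(1 | 1, f)`,
as a product of the corresponding lower-triangular matrices. -/
theorem almost_riordan_factorization {K : Type*} [Field K] [CharZero K]
    (d g f : PowerSeries K)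
    (hd : constantCoeff d ≠ 0) (hg : constantCoeff g ≠ 0)
    (hf0 : constantCoeff f = 0) (hf1 : coeff 1 f ≠ 0) :
    ∀ n k : ℕ, coeff n (arCol d g f k) =
      ∑ j ∈ Finset.range (n + 1),
        coeff n (qtgCol d g j) * coeff j (oneCol f k) :=
  almost_riordan_factorization_general d g f
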